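/- arXiv:1910.01677 — 4 statements merged into one kernel-verified Lean document; each statement's English description precedes it below -/
import Mathlib

section
/- Let F be a finite set of nonzero ℝ-linear functionals on ℝ^n and let c ∈ ℝ^n. Define a relation R on ℝ^n by: b R b′ iff either (i) sgn(f(b)) = sgn(f(b′)) for all f ∈ F (same face), or (ii) for every f ∈ F, sgn(f(b)) = 0 or sgn(f(b)) = sgn(f(b′)), and moreover {f ∈ F : f(b) = 0 and f(c) = 0} = {f ∈ F : f(b′) = 0 and f(c) = 0}. Then two points b₁, b₂ ∈ ℝ^n are related by the equivalence relation generated by R if and only if sgn(f(b₁)) = sgn(f(b₂)) for every f ∈ F with f(c) = 0. -/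
/-!
A step preserves the signs of the functionals vanishing at `c`, which gives one direction.
Conversely, the functionals vanishing at `c` are constant on a line `b + ℝ c`, so every point of
that line is one step away from all nearby points of the line (finitely many strict sign conditions
are open); as `ℝ` is connected, `b` is equivalent to every `b + T c`. For `T` large, every
functional not vanishing at `c` has the sign of `f c` at `b₁ + T c` and at `b₂ + T c`, so these two
points lie in the same face.
-/

open Filter Topology

theorem Filter.Tendsto.eventually_sign_eq {α : Type*} {l : Filter α} {g : α → ℝ} {y : ℝ}
    (hg : Tendsto g l (𝓝 y)) (hy : y ≠ 0) : ∀ᶠ x in l, SignType.sign (g x) = SignType.sign y :=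
  tendsto_pure.1 <| by
    simpa only [nhds_discrete, Function.comp_def] using
      (continuousAt_sign_of_ne_zero hy).tendsto.comp hg

theorem eventually_sign_add_mul_atTop (a : ℝ) {d : ℝ} (hd : d ≠ 0) :
    ∀ᶠ T in atTop, SignType.sign (a + T * d) = SignType.sign d := by
  have hlim : Tendsto (fun T : ℝ => T⁻¹ * a + d) atTop (𝓝 d) := by
    simpa using (tendsto_inv_atTop_zero.mul_const a).add_const d
  filter_upwards [hlim.eventually_sign_eq hd, eventually_gt_atTop 0] with T hT hT0
  have : a + T * d = T * (T⁻¹ * a + d) := by field_simp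
  rw [this, sign_mul, sign_pos hT0, one_mul, hT]

section

variable {E : Type*} [AddCommGroup E] [Module ℝ E] (F : Set (E →ₗ[ℝ] ℝ)) (c : E)

def StratumStep (b b' : E) : Prop :=
  (∀ f ∈ F, SignType.sign (f b) = SignType.sign (f b')) ∨
  ((∀ f ∈ F, SignType.sign (f b) = 0 ∨ SignType.sign (f b) = SignType.sign (f b')) ∧
    {f ∈ F | f b = 0 ∧ f c = 0} = {f ∈ F | f b' = 0 ∧ f c = 0})

variable {F c}

theorem StratumStep.sign_eq {b b' : E} (h : StratumStep F c b b') {f : E →ₗ[ℝ] ℝ} (hf : f ∈ F)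
    (hc : f c = 0) : SignType.sign (f b) = SignType.sign (f b') := by
  rcases h with h | ⟨hle, hzero⟩
  · exact h f hf
  · rcases hle f hf with h0 | h
    · have hb' : f ∈ {f ∈ F | f b' = 0 ∧ f c = 0} := hzero ▸ ⟨hf, sign_eq_zero_iff.1 h0, hc⟩
      rw [h0, hb'.2.1, sign_zero]
    · exact h

theorem sign_eq_of_eqvGen_stratumStep {b b' : E} (h : Relation.EqvGen (StratumStep F c) b b')
    {f : E →ₗ[ℝ] ℝ} (hf : f ∈ F) (hc : f c = 0) : SignType.sign (f b) = SignType.sign (f b') := by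
  induction h with
  | rel _ _ h => exact h.sign_eq hf hc
  | refl => rfl
  | symm _ _ _ ih => exact ih.symm
  | trans _ _ _ _ _ ih₁ ih₂ => exact ih₁.trans ih₂

/-- The zero-set condition is automatic: functionals vanishing at `c` are constant on lines
parallel to `c`. -/
theorem stratumStep_add_smul (b : E) {s t : ℝ}
    (h : ∀ f ∈ F, SignType.sign (f (b + s • c)) = 0 ∨
      SignType.sign (f (b + s • c)) = SignType.sign (f (b + t • c))) :
    StratumStep F c (b + s • c) (b + t • c) := by
  refine Or.inr ⟨h, Set.ext fun f => and_congr_right fun _ => and_congr_left fun hc => ?_⟩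
  simp only [map_add, map_smul, hc, smul_zero]

theorem eventually_stratumStep_add_smul (hF : F.Finite) (b : E) (s : ℝ) :
    ∀ᶠ t in 𝓝 s, StratumStep F c (b + s • c) (b + t • c) := by
  have hsign : ∀ f ∈ F, ∀ᶠ t in 𝓝 s, SignType.sign (f (b + s • c)) = 0 ∨
      SignType.sign (f (b + s • c)) = SignType.sign (f (b + t • c)) := by
    intro f _
    by_cases h0 : f (b + s • c) = 0
    · exact Eventually.of_forall fun _ => Or.inl (sign_eq_zero_iff.2 h0)
    · have hcont : Continuous fun t : ℝ => f (b + t • c) := by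
        simp only [map_add, map_smul, smul_eq_mul]
        fun_prop
      filter_upwards [(hcont.tendsto s).eventually_sign_eq h0] with t ht
      exact Or.inr ht.symm
  filter_upwards [hF.eventually_all.2 hsign] with t ht
  exact stratumStep_add_smul b ht

theorem eqvGen_stratumStep_add_smul (hF : F.Finite) (b : E) (t : ℝ) :
    Relation.EqvGen (StratumStep F c) b (b + t • c) := by
  have := PreconnectedSpace.induction₂' (fun s t => Relation.EqvGen (StratumStep F c)
    (b + s • c) (b + t • c)) (fun s => ?_) ⟨fun _ _ _ => .trans _ _ _⟩ 0 t
  · simpa only [zero_smul, add_zero] using this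
  filter_upwards [eventually_stratumStep_add_smul hF b s] with t ht
  exact ⟨.rel _ _ ht, .symm _ _ (.rel _ _ ht)⟩

theorem eventually_sign_add_smul_atTop (hF : F.Finite) (b : E) :
    ∀ᶠ T in (atTop : Filter ℝ), ∀ f ∈ F, f c ≠ 0 →
      SignType.sign (f (b + T • c)) = SignType.sign (f c) := by
  refine hF.eventually_all.2 fun f _ => ?_
  by_cases hc : f c = 0
  · exact Eventually.of_forall fun _ h => absurd hc h
  · filter_upwards [eventually_sign_add_mul_atTop (f b) hc] with T hT
    simpa only [map_add, map_smul, smul_eq_mul] using fun _ => hT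

end

theorem eqvGen_same_BZ_stratum_general (n : ℕ)
    (F : Set ((Fin n → ℝ) →ₗ[ℝ] ℝ)) (hFfin : F.Finite)
    (c : Fin n → ℝ) :
    ∀ b₁ b₂ : Fin n → ℝ,
      Relation.EqvGen
        (fun b b' : Fin n → ℝ =>
          (∀ f ∈ F, SignType.sign (f b) = SignType.sign (f b')) ∨
          ((∀ f ∈ F, SignType.sign (f b) = 0 ∨ SignType.sign (f b) = SignType.sign (f b')) ∧
            {f ∈ F | f b = 0 ∧ f c = 0} = {f ∈ F | f b' = 0 ∧ f c = 0}))
        b₁ b₂ ↔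
      ∀ f ∈ F, f c = 0 → SignType.sign (f b₁) = SignType.sign (f b₂) := by
  intro b₁ b₂
  change Relation.EqvGen (StratumStep F c) b₁ b₂ ↔ _
  refine ⟨fun h f hf hc => sign_eq_of_eqvGen_stratumStep h hf hc, fun h => ?_⟩
  obtain ⟨T, hT₁, hT₂⟩ := ((eventually_sign_add_smul_atTop hFfin b₁).and
    (eventually_sign_add_smul_atTop hFfin b₂)).exists
  have hfar : StratumStep F c (b₁ + T • c) (b₂ + T • c) := Or.inl fun f hf => by
    by_cases hc : f c = 0
    · simpa only [map_add, map_smul, hc, smul_zero, add_zero] using h f hf hc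
    · rw [hT₁ f hf hc, hT₂ f hf hc]
  exact ((eqvGen_stratumStep_add_smul hFfin b₁ T).trans _ _ _ (.rel _ _ hfar)).trans _ _ _
    (eqvGen_stratumStep_add_smul hFfin b₂ T).symm

/-- the equivalence relation generated by the relation
`B₁ ≤ B₂ with B₁ + iC ≡ B₂ + iC` (together with "same face") relates `b₁, b₂`
iff `sgn(f b₁) = sgn(f b₂)` for every `f ∈ F` vanishing at `c`. -/
theorem eqvGen_same_BZ_stratum (n : ℕ)
    (F : Set ((Fin n → ℝ) →ₗ[ℝ] ℝ)) (hFfin : F.Finite) (hF0 : ∀ f ∈ F, f ≠ 0)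
    (c : Fin n → ℝ) :
    ∀ b₁ b₂ : Fin n → ℝ,
      Relation.EqvGen
        (fun b b' : Fin n → ℝ =>
          (∀ f ∈ F, SignType.sign (f b) = SignType.sign (f b')) ∨
          ((∀ f ∈ F, SignType.sign (f b) = 0 ∨ SignType.sign (f b) = SignType.sign (f b')) ∧
            {f ∈ F | f b = 0 ∧ f c = 0} = {f ∈ F | f b' = 0 ∧ f c = 0}))
        b₁ b₂ ↔
      ∀ f ∈ F, f c = 0 → SignType.sign (f b₁) = SignType.sign (f b₂) :=
  eqvGen_same_BZ_stratum_general n F hFfin c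
end

section
/- Let F be a finite set of ℝ-linear functionals on ℝ^n and let a, b ∈ ℝ^n. Then there exists ε₀ > 0 such that for all ε with 0 < ε < ε₀ and all f ∈ F: sgn(f((1−ε)b + εa)) = sgn(f(b)) if sgn(f(b)) ≠ 0, and sgn(f((1−ε)b + εa)) = sgn(f(a)) if sgn(f(b)) = 0. In particular, all points (1−ε)b + εa for 0 < ε < ε₀ lie in a single face, which depends only on the faces of b and a; this face is the Tits product B ∘ A of the face B of b and the face A of a. -/
/-!
For `f b ≠ 0`, the value `f ((1 - ε) • b + ε • a) = (1 - ε) f b + ε f a` tends to `f b` as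
`ε → 0`, and the sign is locally constant away from `0`; for `f b = 0` the value is `ε f a`,
whose sign is that of `f a` for every `ε > 0`. So each `f` contributes a condition that holds
eventually as `ε → 0⁺`, and finitely many such conditions hold together on some `(0, ε₀)`.
-/

open Filter Topology

theorem eventually_sign_lineMap_eq_left {x : ℝ} (hx : x ≠ 0) (y : ℝ) :
    ∀ᶠ ε in 𝓝 (0 : ℝ), SignType.sign ((1 - ε) * x + ε * y) = SignType.sign x := by
  have hlim : Tendsto (fun ε : ℝ => (1 - ε) * x + ε * y) (𝓝 0) (𝓝 x) :=
    (show Continuous fun ε : ℝ => (1 - ε) * x + ε * y by fun_prop).tendsto' 0 x (by simp)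
  exact ((continuousAt_sign_of_ne_zero hx).tendsto.comp hlim).eventually_mem
    (mem_nhds_discrete.2 (Set.mem_singleton (SignType.sign x)))

theorem eventually_sign_apply_lineMap {E : Type*} [AddCommGroup E] [Module ℝ E]
    (f : E →ₗ[ℝ] ℝ) (a b : E) :
    ∀ᶠ ε in 𝓝[>] (0 : ℝ),
      (SignType.sign (f b) ≠ 0 →
        SignType.sign (f ((1 - ε) • b + ε • a)) = SignType.sign (f b)) ∧
      (SignType.sign (f b) = 0 →
        SignType.sign (f ((1 - ε) • b + ε • a)) = SignType.sign (f a)) := by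
  simp only [map_add, map_smul, smul_eq_mul, ne_eq, sign_eq_zero_iff]
  by_cases hb : f b = 0
  · filter_upwards [self_mem_nhdsWithin] with ε (hε : 0 < ε)
    simp [hb, sign_mul, sign_pos hε]
  · filter_upwards [nhdsWithin_le_nhds (eventually_sign_lineMap_eq_left hb (f a))] with ε hε
    exact ⟨fun _ => hε, fun h => absurd h hb⟩

/-- for small `ε > 0` the point `(1−ε)b + εa` has sign vector
`f ↦ sgn(f b)` if `sgn(f b) ≠ 0` and `f ↦ sgn(f a)` if `sgn(f b) = 0`
(definition of the Tits product `B ∘ A` of faces). -/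
theorem tits_product_exists (n : ℕ)
    (F : Set ((Fin n → ℝ) →ₗ[ℝ] ℝ)) (hFfin : F.Finite)
    (a b : Fin n → ℝ) :
    ∃ ε₀ > (0 : ℝ), ∀ ε : ℝ, 0 < ε → ε < ε₀ → ∀ f ∈ F,
      (SignType.sign (f b) ≠ 0 →
        SignType.sign (f ((1 - ε) • b + ε • a)) = SignType.sign (f b)) ∧
      (SignType.sign (f b) = 0 →
        SignType.sign (f ((1 - ε) • b + ε • a)) = SignType.sign (f a)) := by
  have hall := hFfin.eventually_all.2 fun f _ => eventually_sign_apply_lineMap f a b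
  obtain ⟨ε₀, hε₀, hsub⟩ := mem_nhdsGT_iff_exists_Ioo_subset.1 hall
  exact ⟨ε₀, hε₀, fun ε h₀ h₁ => hsub ⟨h₀, h₁⟩⟩
end

section
/- Let F be a finite set of ℝ-linear functionals on ℝ^n and let a, b, c ∈ ℝ^n. Then there exists ε₀ > 0 such that for all 0 < ε < ε₀ and all f ∈ F: sgn(f(b + εa + ε²c)) = op(sgn(f(b)), op(sgn(f(a)), sgn(f(c)))) = op(op(sgn(f(b)), sgn(f(a))), sgn(f(c))), where op : SignType × SignType → SignType is defined by op(s, t) = s if s ≠ 0 and op(0, t) = t. In particular, the Tits product of faces is associative: (B ∘ A) ∘ C = B ∘ (A ∘ C). -/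
/-!
Along the curve `ε ↦ b + ε a + ε² c` a functional takes the value `f b + ε (f a + ε f c)`.
For small `ε > 0` its sign is that of the first nonzero coefficient, which is exactly the nested
Tits composition of the three signs; the other bracketing follows since `titsOp` is associative,
and finiteness of `F` lets a single `ε₀` serve all functionals.
-/

open Filter Topology

def titsOp (s t : SignType) : SignType := if s = 0 then t else s

theorem titsOp_assoc : ∀ s t u : SignType, titsOp (titsOp s t) u = titsOp s (titsOp t u) := by
  decide

section Perturbation

variable {α : Type*} [Field α] [LinearOrder α] [IsStrictOrderedRing α] [TopologicalSpace α]
  [OrderTopology α]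

theorem eventually_sign_add_mul_eq_titsOp (x : α) {g : α → α} {L : α}
    (hg : Tendsto g (𝓝[>] 0) (𝓝 L)) :
    ∀ᶠ ε in 𝓝[>] 0,
      SignType.sign (x + ε * g ε) = titsOp (SignType.sign x) (SignType.sign (g ε)) := by
  rcases eq_or_ne x 0 with rfl | hx
  · filter_upwards [self_mem_nhdsWithin] with ε (hε : 0 < ε)
    simp [titsOp, sign_mul, sign_pos hε]
  · have hlim : Tendsto (fun ε => x + ε * g ε) (𝓝[>] 0) (𝓝 x) := by
      simpa using tendsto_const_nhds.add ((tendsto_nhdsWithin_of_tendsto_nhds tendsto_id).mul hg)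
    have hsign := (continuousAt_sign_of_ne_zero hx).tendsto.comp hlim
    rw [nhds_discrete, tendsto_pure] at hsign
    filter_upwards [hsign] with ε hε
    simpa [titsOp, hx] using hε

theorem eventually_sign_add_mul_add_mul_eq_titsOp (x y z : α) :
    ∀ᶠ ε in 𝓝[>] 0, SignType.sign (x + ε * (y + ε * z)) =
      titsOp (SignType.sign x) (titsOp (SignType.sign y) (SignType.sign z)) := by
  have hlim : Tendsto (fun ε => y + ε * z) (𝓝[>] 0) (𝓝 y) := by
    refine Tendsto.mono_left ?_ nhdsWithin_le_nhds
    exact (continuous_const.add (continuous_id.mul continuous_const)).tendsto' 0 y (by simp)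
  filter_upwards [eventually_sign_add_mul_eq_titsOp x hlim,
    eventually_sign_add_mul_eq_titsOp y (tendsto_const_nhds (x := z))] with ε hx hy
  rw [hx, hy]

end Perturbation

/-- associativity of the Tits product: for small `ε > 0`,
`sgn(f(b + εa + ε²c)) = op(sgn f b, op(sgn f a, sgn f c)) = op(op(sgn f b, sgn f a), sgn f c)`. -/
theorem tits_product_assoc (n : ℕ)
    (F : Set ((Fin n → ℝ) →ₗ[ℝ] ℝ)) (hFfin : F.Finite)
    (a b c : Fin n → ℝ) :
    ∃ ε₀ > (0 : ℝ), ∀ ε : ℝ, 0 < ε → ε < ε₀ → ∀ f ∈ F,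
      SignType.sign (f (b + ε • a + ε ^ 2 • c)) =
          titsOp (SignType.sign (f b)) (titsOp (SignType.sign (f a)) (SignType.sign (f c))) ∧
      SignType.sign (f (b + ε • a + ε ^ 2 • c)) =
          titsOp (titsOp (SignType.sign (f b)) (SignType.sign (f a))) (SignType.sign (f c)) := by
  have hev : ∀ᶠ ε in 𝓝[>] (0 : ℝ), ∀ f ∈ F, SignType.sign (f (b + ε • a + ε ^ 2 • c)) =
      titsOp (SignType.sign (f b)) (titsOp (SignType.sign (f a)) (SignType.sign (f c))) := by
    refine hFfin.eventually_all.2 fun f _ => ?_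
    filter_upwards [eventually_sign_add_mul_add_mul_eq_titsOp (f b) (f a) (f c)] with ε hε
    have hf : f (b + ε • a + ε ^ 2 • c) = f b + ε * (f a + ε * f c) := by
      simp only [map_add, map_smul, smul_eq_mul]
      ring
    rw [hf, hε]
  obtain ⟨ε₀, hε₀, hsub⟩ := mem_nhdsGT_iff_exists_Ioo_subset.1 hev
  refine ⟨ε₀, hε₀, fun ε hε hεε₀ f hf => ?_⟩
  have h := hsub ⟨hε, hεε₀⟩ f hf
  exact ⟨h, h.trans (titsOp_assoc _ _ _).symm⟩
end

section
/- Let k be a field and let E_{A,B}, for A, B ∈ {−, 0, +}, be nine k-vector spaces equipped with linear maps: p_A : E_{A,0} → E_{A,+} and q_A : E_{A,0} → E_{A,−} for each A ∈ {−, 0, +}, and u_B : E_{−,B} → E_{0,B} and v_B : E_{+,B} → E_{0,B} for each B ∈ {−, 0, +}. Assume the four squares commute: u_+ ∘ p_− = p_0 ∘ u_0, v_+ ∘ p_+ = p_0 ∘ v_0, u_− ∘ q_− = q_0 ∘ u_0, v_− ∘ q_+ = q_0 ∘ v_0; and assume the eight outer-rim maps p_−, p_+, q_−, q_+, u_−,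 u_+, v_−, v_+ are isomorphisms. Define δ_− = u_0 : E_{−,0} → E_{0,0}, δ_+ = v_0 : E_{+,0} → E_{0,0}, γ_− = p_−^{−1} ∘ u_+^{−1} ∘ p_0 : E_{0,0} → E_{−,0}, and γ_+ = q_+^{−1} ∘ v_−^{−1} ∘ q_0 : E_{0,0} → E_{+,0}. Then: γ_− ∘ δ_− = id on E_{−,0}, γ_+ ∘ δ_+ = id on E_{+,0}, and both γ_+ ∘ δ_− : E_{−,0} → E_{+,0} and γ_− ∘ δ_+ : E_{+,0} → E_{−,0} are isomorphisms. -/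
/-!
Each `γ` is the unique lift of a map out of `E₀₀` through an invertible composite `f` of two rim
maps. Composing `γ ∘ δ` with `f` and using the commutative square at `δ` turns it into a composite
of rim maps: `f` itself when `γ` and `δ` sit on the same side (so `γ ∘ δ = id`, as `f` is
injective), and the other invertible rim composite when they sit on opposite sides.
-/

namespace Function

variable {X Y Z W : Type*} {f : X → W} {g : Y → W} {γ : Y → X} {δ : Z → Y} {φ : Z → W}

theorem comp_eq_of_lift_of_comm (hγ : ∀ y, f (γ y) = g y) (hδ : ∀ z, g (δ z) = φ z) :
    f ∘ γ ∘ δ = φ :=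
  funext fun z => (hγ (δ z)).trans (hδ z)

theorem leftInverse_of_lift_of_comm {δ : X → Y} (hf : Injective f) (hγ : ∀ y, f (γ y) = g y)
    (hδ : ∀ x, g (δ x) = f x) : LeftInverse γ δ :=
  fun x => hf (congrFun (comp_eq_of_lift_of_comm hγ hδ) x)

theorem bijective_comp_of_lift_of_comm (hf : Bijective f) (hγ : ∀ y, f (γ y) = g y)
    (hδ : ∀ z, g (δ z) = φ z) (hφ : Bijective φ) : Bijective (γ ∘ δ) :=
  (hf.of_comp_iff' _).mp (comp_eq_of_lift_of_comm hγ hδ ▸ hφ)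

end Function

open Function

open SignType in
/-- passage from a 3×3 matrix diagram (with invertible outer rim) to a
`Perv(ℂ,0)`-diagram `E₋ ⇄ E₀ ⇄ E₊`: with `δ₋ = u 0`, `δ₊ = v 0`,
`γ₋ = (p −)⁻¹ ∘ (u +)⁻¹ ∘ p 0` and `γ₊ = (q +)⁻¹ ∘ (v −)⁻¹ ∘ q 0`
(characterized by `hγm`, `hγp`), one has `γ₋ ∘ δ₋ = id`, `γ₊ ∘ δ₊ = id`, and
`γ₊ ∘ δ₋`, `γ₋ ∘ δ₊` are isomorphisms. Here `E A B` for `A B : SignType` are the nine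
spaces, `p/q` are the maps `∂'` towards `+`/`−` in the second index and `u/v` the maps
`∂''` from `−`/`+` to `0` in the first index. -/
theorem matrix_diagram_to_perv_C0 (k : Type*) [Field k]
    (E : SignType → SignType → Type*)
    [∀ A B, AddCommGroup (E A B)] [∀ A B, Module k (E A B)]
    (p : ∀ A : SignType, E A zero →ₗ[k] E A pos)
    (q : ∀ A : SignType, E A zero →ₗ[k] E A neg)
    (u : ∀ B : SignType, E neg B →ₗ[k] E zero B)
    (v : ∀ B : SignType, E pos B →ₗ[k] E zero B)
    (hsq1 : (u pos).comp (p neg) = (p zero).comp (u zero))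
    (hsq2 : (v pos).comp (p pos) = (p zero).comp (v zero))
    (hsq3 : (u neg).comp (q neg) = (q zero).comp (u zero))
    (hsq4 : (v neg).comp (q pos) = (q zero).comp (v zero))
    (hpm : Function.Bijective (p neg)) (hpp : Function.Bijective (p pos))
    (hqm : Function.Bijective (q neg)) (hqp : Function.Bijective (q pos))
    (hum : Function.Bijective (u neg)) (hup : Function.Bijective (u pos))
    (hvm : Function.Bijective (v neg)) (hvp : Function.Bijective (v pos))
    (γm : E zero zero →ₗ[k] E neg zero)
    (hγm : ∀ e : E zero zero, u pos (p neg (γm e)) = p zero e)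
    (γp : E zero zero →ₗ[k] E pos zero)
    (hγp : ∀ e : E zero zero, v neg (q pos (γp e)) = q zero e) :
    (∀ e : E neg zero, γm (u zero e) = e) ∧
    (∀ e : E pos zero, γp (v zero e) = e) ∧
    Function.Bijective (fun e : E neg zero => γp (u zero e)) ∧
    Function.Bijective (fun e : E pos zero => γm (v zero e)) := by
  have sq1 e := (LinearMap.congr_fun hsq1 e).symm
  have sq2 e := (LinearMap.congr_fun hsq2 e).symm
  have sq3 e := (LinearMap.congr_fun hsq3 e).symm
  have sq4 e := (LinearMap.congr_fun hsq4 e).symm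
  exact ⟨leftInverse_of_lift_of_comm (hup.injective.comp hpm.injective) hγm sq1,
    leftInverse_of_lift_of_comm (hvm.injective.comp hqp.injective) hγp sq4,
    bijective_comp_of_lift_of_comm (hvm.comp hqp) hγp sq3 (hum.comp hqm),
    bijective_comp_of_lift_of_comm (hup.comp hpm) hγm sq2 (hvp.comp hpp)⟩
end
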